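/- The algebra 𝒢 separates the points of the Laakso space L: for any two distinct points p, q ∈ L there exists f ∈ 𝒢 with f(p) ≠ f(q). -/

import Mathlib

open MeasureTheory Set Filter

/-- The value `w(m_1, …, m_l)` of a tuple, encoded as a list `[m_1, …, m_l]`
(so list index `i` corresponds to `m_{i+1}`, and `J i` to `j_{i+1}`):
`w = Σ_{i=1}^{l} m_i ∏_{h=1}^{i} j_h⁻¹`. -/
noncomputable def wLoc (J : ℕ → ℕ) (m : List ℕ) : ℝ :=
  ∑ i ∈ Finset.range m.length,
    (m.getD i 0 : ℝ) * ∏ h ∈ Finset.range (i + 1), ((J h : ℝ))⁻¹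

/-- A tuple `(m_1, …, m_l)` (encoded as a list) is admissible if `l ≥ 1`,
`0 ≤ m_i < j_i` for all `1 ≤ i ≤ l` and `0 < m_l`. -/
def Admissible (J : ℕ → ℕ) (m : List ℕ) : Prop :=
  m ≠ [] ∧ (∀ i, i < m.length → m.getD i 0 < J i) ∧ 0 < m.getD (m.length - 1) 0

/-- `x` is a wormhole location of level `l`. -/
def IsWormhole (J : ℕ → ℕ) (l : ℕ) (x : ℝ) : Prop :=
  ∃ m : List ℕ, m.length = l ∧ Admissible J m ∧ x = wLoc J m

/-- The unit interval `[0,1]`. -/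
abbrev I01 : Type := Set.Icc (0 : ℝ) 1

/-- The Cantor space `K = {0,1}^{ℕ≥1}`; coordinate `i : ℕ` encodes `w_{i+1}`. -/
abbrev Kspace : Type := ℕ → Bool

/-- The relation `R` on `[0,1] × K`: `(x,w) R (x',w')` iff `x = x'`, `x` is a wormhole
location of some level `l ≥ 1`, and `w, w'` differ in coordinate `l` and agree in all
other coordinates (coordinate `l` of the sequence is encoded as index `l - 1`). -/
def laaksoRel (J : ℕ → ℕ) (p q : I01 × Kspace) : Prop :=
  p.1 = q.1 ∧ ∃ l : ℕ, IsWormhole J (l + 1) (p.1 : ℝ) ∧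
    p.2 l ≠ q.2 l ∧ ∀ i, i ≠ l → p.2 i = q.2 i

/-- The Laakso space: the quotient of `[0,1] × K` by the equivalence relation
generated by `laaksoRel`. -/
def Laakso (J : ℕ → ℕ) : Type := Quot (laaksoRel J)

instance (J : ℕ → ℕ) : TopologicalSpace (Laakso J) :=
  inferInstanceAs (TopologicalSpace (Quot (laaksoRel J)))

/-- The relation defining the approximating quantum graph `F_n` on `[0,1] × {0,1}^n`. -/
def graphRel (J : ℕ → ℕ) (n : ℕ) (p q : I01 × (Fin n → Bool)) : Prop :=
  p.1 = q.1 ∧ ∃ l : Fin n, IsWormhole J (l.1 + 1) (p.1 : ℝ) ∧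
    p.2 l ≠ q.2 l ∧ ∀ i, i ≠ l → p.2 i = q.2 i

/-- The approximating quantum graph `F_n`. -/
def FGraph (J : ℕ → ℕ) (n : ℕ) : Type := Quot (graphRel J n)

instance (J : ℕ → ℕ) (n : ℕ) : TopologicalSpace (FGraph J n) :=
  inferInstanceAs (TopologicalSpace (Quot (graphRel J n)))

/-- The projection `[0,1] × {0,1}^{n+1} → [0,1] × {0,1}^n` forgetting the last coordinate. -/
def projMap (n : ℕ) : I01 × (Fin (n + 1) → Bool) → I01 × (Fin n → Bool) :=
  fun p => (p.1, fun i => p.2 i.castSucc)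

/-- The truncation `[0,1] × K → [0,1] × {0,1}^n`, `(x,w) ↦ (x, w_1, …, w_n)`. -/
def truncMap (n : ℕ) : I01 × Kspace → I01 × (Fin n → Bool) :=
  fun p => (p.1, fun i => p.2 i)

/-- Lebesgue measure on `[0,1]`. -/
noncomputable def lebI : Measure I01 := Measure.comap Subtype.val volume

/-- The finite set `{0,1} ∪ {wormhole locations of level at most n}`. -/
def wormholeSet (J : ℕ → ℕ) (n : ℕ) : Set ℝ :=
  {0, 1} ∪ {x : ℝ | ∃ l : ℕ, 1 ≤ l ∧ l ≤ n ∧ IsWormhole J l x}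

/-- The pullback `f ∘ ι` of `f : L → ℝ`, with fixed Cantor coordinate `w`, viewed as a
function of a real variable (via the retraction of `ℝ` onto `[0,1]`; only its values on
subintervals of `[0,1]` are ever used). -/
noncomputable def pull (J : ℕ → ℕ) (f : Laakso J → ℝ) (w : Kspace) (x : ℝ) : ℝ :=
  f (Quot.mk (laaksoRel J) (Set.projIcc (0 : ℝ) 1 zero_le_one x, w))

/-- Membership in `𝒢_n`: `f : L → ℝ` is continuous, its pullback `f∘ι` is constant in the
Cantor direction on each cell `{w : (w_1, …, w_n) = a}` of depth `n` for each fixed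
`x ∈ [0,1]`, and for each fixed `w ∈ K` it is continuously differentiable (with one-sided
derivatives at the endpoints) on each closed subinterval of `[0,1]` whose endpoints are
consecutive points of the finite set `{0,1} ∪ {wormhole locations of level ≤ n}`. -/
def InG (J : ℕ → ℕ) (n : ℕ) (f : Laakso J → ℝ) : Prop :=
  Continuous f ∧
  (∀ (x : I01) (w w' : Kspace), (∀ i, i < n → w i = w' i) →
    f (Quot.mk (laaksoRel J) (x, w)) = f (Quot.mk (laaksoRel J) (x, w'))) ∧
  (∀ (w : Kspace) (a b : ℝ), a ∈ wormholeSet J n → b ∈ wormholeSet J n → a < b →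
    (∀ s ∈ wormholeSet J n, ¬(a < s ∧ s < b)) →
    ContDiffOn ℝ 1 (pull J f w) (Set.Icc a b))

/-!
Points of `L` over different `x` are separated by the coordinate `x` itself. Over a common `x`,
two distinct points have Cantor coordinates `w, w'` that differ somewhere. Since the level of a
wormhole location is unique (an admissible tuple has a nonzero last digit), flipping the one
coordinate glued at `x` yields representatives that differ at a coordinate `l` at which `x` is
not a wormhole of level `l + 1`. A polynomial `g` vanishing exactly on the finitely many
wormholes of level `l + 1` then makes `g(x) · (±1 according to w_l)` a well-defined element of
`𝒢_{l+1}` separating the two points.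
-/

section Wormholes

variable {J : ℕ → ℕ}

lemma wLoc_nonneg (m : List ℕ) : 0 ≤ wLoc J m :=
  Finset.sum_nonneg fun _ _ => mul_nonneg (Nat.cast_nonneg _)
    (Finset.prod_nonneg fun _ _ => inv_nonneg.2 (Nat.cast_nonneg _))

lemma wLoc_le_one (hJ : ∀ h, 0 < J h) {m : List ℕ}
    (hm : ∀ i, i < m.length → m.getD i 0 < J i) : wLoc J m ≤ 1 := by
  set Q : ℕ → ℝ := fun n => ∏ h ∈ Finset.range n, ((J h : ℝ))⁻¹
  have hQ_nonneg : ∀ n, 0 ≤ Q n := fun n =>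
    Finset.prod_nonneg fun _ _ => inv_nonneg.2 (Nat.cast_nonneg _)
  -- digit `m_i ≤ J i - 1` makes each term at most `Q i - Q (i + 1)`, and the sum telescopes
  have hterm : ∀ i < m.length, (m.getD i 0 : ℝ) * Q (i + 1) ≤ Q i - Q (i + 1) := by
    intro i hi
    have hdigit : (m.getD i 0 : ℝ) + 1 ≤ J i := by exact_mod_cast hm i hi
    have hJi : (0 : ℝ) < J i := by exact_mod_cast hJ i
    calc (m.getD i 0 : ℝ) * Q (i + 1) ≤ ((J i : ℝ) - 1) * Q (i + 1) :=
          mul_le_mul_of_nonneg_right (by linarith) (hQ_nonneg _)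
      _ = Q i - Q (i + 1) := by
          simp only [Q, Finset.prod_range_succ]
          field_simp
  calc wLoc J m ≤ ∑ i ∈ Finset.range m.length, (Q i - Q (i + 1)) :=
        Finset.sum_le_sum fun i hi => hterm i (Finset.mem_range.1 hi)
    _ = Q 0 - Q m.length := Finset.sum_range_sub' Q _
    _ ≤ 1 := by
      have hQ0 : Q 0 = 1 := Finset.prod_range_zero _
      linarith [hQ_nonneg m.length]

def wNum (J : ℕ → ℕ) (m : List ℕ) : ℕ :=
  ∑ i ∈ Finset.range m.length, m.getD i 0 * ∏ h ∈ Finset.Ico (i + 1) m.length, J h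

lemma wLoc_mul_prod (hJ : ∀ h, 0 < J h) (m : List ℕ) :
    wLoc J m * ∏ h ∈ Finset.range m.length, (J h : ℝ) = wNum J m := by
  unfold wLoc wNum
  push_cast
  rw [Finset.sum_mul]
  refine Finset.sum_congr rfl fun i hi => ?_
  rw [← Finset.prod_range_mul_prod_Ico (fun h => (J h : ℝ))
      (Nat.succ_le_of_lt (Finset.mem_range.1 hi)), Finset.prod_inv_distrib]
  have : (∏ h ∈ Finset.range (i + 1), (J h : ℝ)) ≠ 0 :=
    Finset.prod_ne_zero_iff.2 fun h _ => by exact_mod_cast (hJ h).ne'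
  field_simp

lemma wNum_modEq_getLast {m : List ℕ} (hm : m ≠ []) :
    wNum J m ≡ m.getD (m.length - 1) 0 [MOD J (m.length - 1)] := by
  obtain ⟨k, hk⟩ : ∃ k, m.length = k + 1 := Nat.exists_eq_succ_of_ne_zero (by simpa using hm)
  have hdvd : J k ∣ ∑ i ∈ Finset.range k, m.getD i 0 * ∏ h ∈ Finset.Ico (i + 1) (k + 1), J h :=
    Finset.dvd_sum fun i hi => Dvd.dvd.mul_left (Finset.dvd_prod_of_mem J
      (Finset.mem_Ico.2 ⟨Finset.mem_range.1 hi, Nat.lt_succ_self k⟩)) _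
  rw [wNum, hk, Finset.sum_range_succ, Finset.Ico_self, Finset.prod_empty, mul_one,
    Nat.add_sub_cancel]
  simpa using (Nat.modEq_zero_iff_dvd.2 hdvd).add_right (m.getD k 0)

/- After clearing denominators, the longer tuple's numerator is divisible by its last radix,
yet congruent to its nonzero last digit. -/
lemma wLoc_ne_of_length_lt (hJ : ∀ h, 0 < J h) {m m' : List ℕ} (hm' : Admissible J m')
    (hlen : m.length < m'.length) : wLoc J m ≠ wLoc J m' := by
  intro heq
  set l' := m'.length - 1
  have hl' : l' ∈ Finset.Ico m.length m'.length := Finset.mem_Ico.2 ⟨by omega, by omega⟩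
  have hnum : wNum J m' = wNum J m * ∏ h ∈ Finset.Ico m.length m'.length, J h := by
    have := wLoc_mul_prod hJ m'
    rw [← Finset.prod_range_mul_prod_Ico _ hlen.le, ← mul_assoc, ← heq,
      wLoc_mul_prod hJ m] at this
    exact_mod_cast this.symm
  have hdvd : J l' ∣ m'.getD l' 0 := by
    have := (wNum_modEq_getLast (J := J) hm'.1).symm
    refine (Nat.modEq_zero_iff_dvd.1 (this.trans ?_))
    exact Nat.modEq_zero_iff_dvd.2 (hnum ▸ Dvd.dvd.mul_left (Finset.dvd_prod_of_mem J hl') _)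
  exact hm'.2.2.ne' (Nat.eq_zero_of_dvd_of_lt hdvd (hm'.2.1 l' (by omega)))

lemma IsWormhole.level_eq (hJ : ∀ h, 0 < J h) {l l' : ℕ} {x : ℝ}
    (h : IsWormhole J l x) (h' : IsWormhole J l' x) : l = l' := by
  obtain ⟨m, rfl, hm, rfl⟩ := h
  obtain ⟨m', rfl, hm', hx⟩ := h'
  rcases lt_trichotomy m.length m'.length with hlt | heq | hgt
  · exact absurd hx (wLoc_ne_of_length_lt hJ hm' hlt)
  · exact heq
  · exact absurd hx.symm (wLoc_ne_of_length_lt hJ hm hgt)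

lemma finite_setOf_isWormhole (J : ℕ → ℕ) (l : ℕ) : {x : ℝ | IsWormhole J l x}.Finite := by
  set B := ∑ i ∈ Finset.range l, J i + 1
  refine (Set.finite_range fun v : Fin l → Fin B =>
    ∑ i : Fin l, ((v i : ℕ) : ℝ) * ∏ h ∈ Finset.range (i + 1), ((J h : ℝ))⁻¹).subset ?_
  rintro x ⟨m, rfl, ⟨-, hdigit, -⟩, rfl⟩
  have hB : ∀ i : Fin m.length, m.getD i 0 < B := fun i =>
    Nat.lt_succ_of_le ((hdigit i i.2).le.trans
      (Finset.single_le_sum (fun _ _ => Nat.zero_le _) (Finset.mem_range.2 i.2)))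
  exact ⟨fun i => ⟨m.getD i 0, hB i⟩, Fin.sum_univ_eq_sum_range
    (fun i => (m.getD i 0 : ℝ) * ∏ h ∈ Finset.range (i + 1), ((J h : ℝ))⁻¹) _⟩

lemma wormholeSet_subset_Icc (hJ : ∀ h, 0 < J h) (n : ℕ) :
    wormholeSet J n ⊆ Set.Icc 0 1 := by
  rintro x ((rfl | rfl) | ⟨l, -, -, m, -, ⟨-, hdigit, -⟩, rfl⟩)
  · exact Set.left_mem_Icc.2 zero_le_one
  · exact Set.right_mem_Icc.2 zero_le_one
  · exact ⟨wLoc_nonneg m, wLoc_le_one hJ hdigit⟩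

end Wormholes

section Separation

variable {J : ℕ → ℕ}

-- Flip the coordinate glued at `x`, if any: by uniqueness of the level, no other one is glued there.
lemma exists_mk_eq_of_mk_ne (hJ : ∀ h, 0 < J h) {x : I01} {w w' : Kspace}
    (hne : Quot.mk (laaksoRel J) (x, w) ≠ Quot.mk (laaksoRel J) (x, w')) :
    ∃ (w₂ : Kspace) (l : ℕ), Quot.mk (laaksoRel J) (x, w) = Quot.mk (laaksoRel J) (x, w₂) ∧
      w₂ l ≠ w' l ∧ ¬ IsWormhole J (l + 1) x := by
  obtain ⟨l, hl⟩ := Function.ne_iff.1 fun h : w = w' => hne (by rw [h])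
  by_cases hworm : IsWormhole J (l + 1) x
  swap
  · exact ⟨w, l, rfl, hl, hworm⟩
  set w₂ := Function.update w l (w' l)
  have hmk : Quot.mk (laaksoRel J) (x, w) = Quot.mk (laaksoRel J) (x, w₂) :=
    Quot.sound ⟨rfl, l, hworm, by simpa [w₂] using hl,
      fun i hi => (Function.update_of_ne hi _ w).symm⟩
  obtain ⟨l', hl'⟩ := Function.ne_iff.1 fun h : w₂ = w' => hne (by rw [hmk, h])
  have hll' : l' ≠ l := by rintro rfl; simp [w₂] at hl'
  exact ⟨w₂, l', hmk, hl', fun h => hll' (by simpa using h.level_eq hJ hworm)⟩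

lemma inG_quotLift (hJ : ∀ h, 0 < J h) {n : ℕ} {g : ℝ → ℝ} {φ : Kspace → ℝ}
    (hg : ContDiff ℝ 1 g) (hφ : Continuous φ)
    (hφn : ∀ w w' : Kspace, (∀ i, i < n → w i = w' i) → φ w = φ w')
    (hrel : ∀ p q, laaksoRel J p q → g p.1 * φ p.2 = g q.1 * φ q.2) :
    InG J n (Quot.lift (fun p : I01 × Kspace => g p.1 * φ p.2) hrel) := by
  refine ⟨continuous_quot_lift _ ?_, fun x w w' hww' => ?_, fun w a b ha hb _ _ => ?_⟩
  · exact (hg.continuous.comp (continuous_subtype_val.comp continuous_fst)).mul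
      (hφ.comp continuous_snd)
  · exact congrArg (g x * ·) (hφn w w' hww')
  · refine (hg.contDiffOn.mul (contDiffOn_const (c := φ w))).congr fun y hy => ?_
    have hy01 : y ∈ Set.Icc (0 : ℝ) 1 := Set.Icc_subset_Icc
      (wormholeSet_subset_Icc hJ n ha).1 (wormholeSet_subset_Icc hJ n hb).2 hy
    simp [pull, Set.projIcc_of_mem zero_le_one hy01]

lemma exists_inG_ne_of_fst_ne (hJ : ∀ h, 0 < J h) {x x' : I01} (w w' : Kspace) (hx : x ≠ x') :
    ∃ (n : ℕ) (f : Laakso J → ℝ), InG J n f ∧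
      f (Quot.mk (laaksoRel J) (x, w)) ≠ f (Quot.mk (laaksoRel J) (x', w')) := by
  have hrel : ∀ p q, laaksoRel J p q →
      id (p.1 : ℝ) * (fun _ : Kspace => (1 : ℝ)) p.2 = id (q.1 : ℝ) * (fun _ => 1) q.2 :=
    fun _ _ h => by rw [h.1]
  exact ⟨0, _, inG_quotLift hJ contDiff_id continuous_const (fun _ _ _ => rfl) hrel,
    fun h => hx (Subtype.ext (by simpa using h))⟩

lemma exists_inG_ne_of_not_isWormhole (hJ : ∀ h, 0 < J h) {x : I01} {w w' : Kspace} {l : ℕ}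
    (hl : w l ≠ w' l) (hx : ¬ IsWormhole J (l + 1) x) :
    ∃ (n : ℕ) (f : Laakso J → ℝ), InG J n f ∧
      f (Quot.mk (laaksoRel J) (x, w)) ≠ f (Quot.mk (laaksoRel J) (x, w')) := by
  classical
  have hfin := finite_setOf_isWormhole J (l + 1)
  set S := hfin.toFinset
  set g : ℝ → ℝ := fun y => ∏ z ∈ S, (y - z)
  set φ : Kspace → ℝ := fun w => if w l then 1 else -1
  have hg : ContDiff ℝ 1 g := contDiff_prod fun z _ => contDiff_id.sub contDiff_const
  have hφ : Continuous φ :=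
    (continuous_of_discreteTopology (f := fun b : Bool => if b then (1 : ℝ) else -1)).comp
      (continuous_apply l)
  have hφw : φ w ≠ φ w' := by
    simp only [φ]
    revert hl
    cases w l <;> cases w' l <;> norm_num
  have hgx : g x ≠ 0 := Finset.prod_ne_zero_iff.2 fun z hz =>
    sub_ne_zero.2 fun hxz => hx (hxz ▸ hfin.mem_toFinset.1 hz)
  -- only the gluing at level `l + 1` changes `w l`, and there `g` vanishes
  have hrel : ∀ p q, laaksoRel J p q → g p.1 * φ p.2 = g q.1 * φ q.2 := by
    rintro ⟨y, v⟩ ⟨_, v'⟩ ⟨rfl, k, hk, -, hagree⟩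
    by_cases hkl : k = l
    · subst hkl
      have hgy : g y = 0 := Finset.prod_eq_zero (hfin.mem_toFinset.2 hk) (sub_self _)
      simp [hgy]
    · simp only [φ, show v l = v' l from hagree l (Ne.symm hkl)]
  refine ⟨l + 1, _, inG_quotLift hJ hg hφ (fun v v' hv => ?_) hrel,
    fun h => hφw (mul_left_cancel₀ hgx h)⟩
  simp only [φ, hv l (Nat.lt_succ_self l)]

end Separation

theorem stmt7_general (j : ℕ) (J : ℕ → ℕ) (hj : 2 ≤ j)
    (hJ : ∀ i, J i = j ∨ J i = j + 1) :
    ∀ p q : Laakso J, p ≠ q → ∃ (n : ℕ) (f : Laakso J → ℝ), InG J n f ∧ f p ≠ f q := by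
  have hJpos : ∀ i, 0 < J i := fun i => by rcases hJ i with h | h <;> omega
  rintro ⟨x, w⟩ ⟨x', w'⟩ hne
  by_cases hx : x = x'
  · subst hx
    obtain ⟨w₂, l, hmk, hl, hworm⟩ := exists_mk_eq_of_mk_ne hJpos hne
    rw [hmk]
    exact exists_inG_ne_of_not_isWormhole hJpos hl hworm
  · exact exists_inG_ne_of_fst_ne hJpos w w' hx

/-- the algebra `𝒢 = ⋃_n 𝒢_n` separates the points of the Laakso space. -/
theorem stmt7 (t : ℝ) (j : ℕ) (J : ℕ → ℕ)
    (ht : t ∈ Set.Ioo (0 : ℝ) (1 / 2)) (hj : 2 ≤ j)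
    (hjt : 1 / ((j : ℝ) + 1) < t ∧ t ≤ 1 / (j : ℝ))
    (hJ : ∀ i, J i = j ∨ J i = j + 1) :
    ∀ p q : Laakso J, p ≠ q → ∃ (n : ℕ) (f : Laakso J → ℝ), InG J n f ∧ f p ≠ f q :=
  stmt7_general j J hj hJ
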